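/- arXiv:2204.06851 — 2 statements merged into one kernel-verified Lean document; each statement's English description precedes it below -/
import Mathlib

section
/- Let y be a nonnegative square-integrable real random variable with E[y] = μ where 0 ≤ μ ≤ 1, and suppose E[y²] ≤ μ + (1/2)·μ². Then E[p(y)] ≥ 0.634·μ, where p(y) := 1 - exp(-(y + (1/2)·y² + ((4 - 2√3)/3)·y³)). -/
/-!
The exponent `g(t) = t + t²/2 + κ t³`, `κ = (4 - 2√3)/3 ≤ 1/3`, satisfies `g'' ≤ g'²` on
`[0, ∞)`, so `p = 1 - exp (-g)` is concave there. For any quadratic `q(t) = α + β t - γ t²`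
with `γ ≥ 0` lying below `p` on `[0, ∞)`, taking expectations gives
`E[p(y)] ≥ α + β μ - γ E[y²] ≥ α + β μ - γ (μ + μ²/2)`.
For `μ ≤ 1/2` take `q(t) = t - 0.29 t²`: then `q ≤ p` is a polynomial inequality once `exp g` is
replaced by a Taylor polynomial. For `μ ≥ 1/2` take `q(t) = -0.01108 + 1.10746 t - 0.30812 t²`,
which is too close to `p` for that; instead, by concavity `p` lies above its chords between
finitely many nodes whose values are certified by Taylor polynomials, and `q` lies below each chord.
-/

open MeasureTheory Real Set
open scoped Nat

noncomputable def chord (n m : ℝ × ℝ) (t : ℝ) : ℝ :=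
  n.2 + (m.2 - n.2) / (m.1 - n.1) * (t - n.1)

theorem ConcaveOn.chord_le {f : ℝ → ℝ} {s : Set ℝ} (hf : ConcaveOn ℝ s f) {n m : ℝ × ℝ}
    (hn : n.1 ∈ s) (hm : m.1 ∈ s) (hlt : n.1 < m.1) (ha : n.2 ≤ f n.1) (hb : m.2 ≤ f m.1)
    {t : ℝ} (ht : t ∈ Icc n.1 m.1) : chord n m t ≤ f t := by
  obtain ⟨x, a⟩ := n
  obtain ⟨y, b⟩ := m
  dsimp only at *
  have hyx : 0 < y - x := sub_pos.2 hlt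
  have hw₁ : 0 ≤ (y - t) / (y - x) := div_nonneg (sub_nonneg.2 ht.2) hyx.le
  have hw₂ : 0 ≤ (t - x) / (y - x) := div_nonneg (sub_nonneg.2 ht.1) hyx.le
  have hconc := hf.2 hn hm hw₁ hw₂ (by field_simp; ring)
  have ht' : (y - t) / (y - x) * x + (t - x) / (y - x) * y = t := by
    field_simp; ring
  simp only [smul_eq_mul, ht'] at hconc
  calc chord (x, a) (y, b) t = (y - t) / (y - x) * a + (t - x) / (y - x) * b := by
        unfold chord; field_simp; ring
    _ ≤ (y - t) / (y - x) * f x + (t - x) / (y - x) * f y := by gcongr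
    _ ≤ f t := hconc

/-- Nodes are pairs `(x, a)`; a step from `n` to `m` certifies `m.2 ≤ f m.1` and that `q` lies
below the chord from `n` to `m`. -/
def ChordStep (f q : ℝ → ℝ) (n m : ℝ × ℝ) : Prop :=
  n.1 < m.1 ∧ m.2 ≤ f m.1 ∧ ∀ t ∈ Icc n.1 m.1, q t ≤ chord n m t

theorem le_of_isChain_chordStep {f q : ℝ → ℝ} {n : ℝ × ℝ} {l : List (ℝ × ℝ)}
    (hf : ConcaveOn ℝ (Ici n.1) f) (hn : n.2 ≤ f n.1) (hl : (n :: l).IsChain (ChordStep f q))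
    {t : ℝ} (ht : t ∈ Ico n.1 ((n :: l).getLast (List.cons_ne_nil n l)).1) : q t ≤ f t := by
  induction l generalizing n with
  | nil => simp at ht
  | cons m l ih =>
    obtain ⟨⟨hlt, hb, hq⟩, hrest⟩ := List.isChain_cons_cons.1 hl
    rw [List.getLast_cons_cons] at ht
    rcases lt_or_ge t m.1 with htm | htm
    · exact (hq t ⟨ht.1, htm.le⟩).trans
        (hf.chord_le self_mem_Ici hlt.le hlt hn hb ⟨ht.1, htm.le⟩)
    · exact ih (hf.subset (Ici_subset_Ici.2 hlt.le) (convex_Ici _)) hb hrest ⟨htm, ht.2⟩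

theorem quadratic_le_affine {α β γ c s : ℝ} (hγ : 0 < γ) (h : (β - s) ^ 2 ≤ 4 * γ * (c - α))
    (t : ℝ) : α + β * t - γ * t ^ 2 ≤ c + s * t := by
  nlinarith [sq_nonneg (2 * γ * t - (β - s))]

theorem concaveOn_one_sub_exp_neg {D : Set ℝ} (hD : Convex ℝ D) {g g' g'' : ℝ → ℝ}
    (hg : ∀ x, HasDerivAt g (g' x) x) (hg' : ∀ x, HasDerivAt g' (g'' x) x)
    (hle : ∀ x ∈ interior D, g'' x ≤ g' x ^ 2) :
    ConcaveOn ℝ D fun x => 1 - exp (-g x) := by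
  have hd : ∀ x, HasDerivAt (fun x => 1 - exp (-g x)) (g' x * exp (-g x)) x := fun x =>
    ((hg x).neg.exp.const_sub 1).congr_deriv (by simp only [Pi.neg_apply]; ring)
  have hd' : ∀ x, HasDerivAt (fun x => g' x * exp (-g x)) ((g'' x - g' x ^ 2) * exp (-g x)) x :=
    fun x => ((hg' x).mul (hg x).neg.exp).congr_deriv (by simp only [Pi.neg_apply]; ring)
  refine concaveOn_of_hasDerivWithinAt2_nonpos hD
    (fun x _ => (hd x).continuousAt.continuousWithinAt)
    (fun x _ => (hd x).hasDerivWithinAt) (fun x _ => (hd' x).hasDerivWithinAt) fun x hx => ?_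
  exact mul_nonpos_of_nonpos_of_nonneg (sub_nonpos.2 (hle x hx)) (exp_pos _).le

theorem le_integral_of_quadratic_le {Ω : Type*} [MeasurableSpace Ω] {P : Measure Ω}
    [IsProbabilityMeasure P] {y : Ω → ℝ} {f : ℝ → ℝ} {α β γ : ℝ} (hy : MemLp y 2 P)
    (hf : Integrable (fun ω => f (y ω)) P) (hq : ∀ ω, α + β * y ω - γ * y ω ^ 2 ≤ f (y ω)) :
    α + β * ∫ ω, y ω ∂P - γ * ∫ ω, y ω ^ 2 ∂P ≤ ∫ ω, f (y ω) ∂P := by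
  have h₁ : Integrable y P := hy.integrable one_le_two
  have h₂ : Integrable (fun ω => y ω ^ 2) P := hy.integrable_sq
  have hlin : Integrable (fun ω => α + β * y ω) P := (integrable_const α).add (h₁.const_mul β)
  calc α + β * ∫ ω, y ω ∂P - γ * ∫ ω, y ω ^ 2 ∂P
      = ∫ ω, (α + β * y ω - γ * y ω ^ 2) ∂P := by
        rw [integral_sub hlin (h₂.const_mul γ), integral_add (integrable_const α) (h₁.const_mul β),
          integral_const_mul, integral_const_mul, integral_const]
        simp
    _ ≤ ∫ ω, f (y ω) ∂P := integral_mono (hlin.sub (h₂.const_mul γ)) hf hq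

noncomputable def selectionProb (t : ℝ) : ℝ :=
  1 - exp (-(t + (1/2) * t ^ 2 + ((4 - 2 * √3) / 3) * t ^ 3))

lemma cubic_coeff_bounds : 0.178632 ≤ (4 - 2 * √3) / 3 ∧ (4 - 2 * √3) / 3 ≤ 1 / 3 := by
  have h3 := Real.sq_sqrt (show (0:ℝ) ≤ 3 by norm_num)
  constructor <;> nlinarith [Real.sqrt_nonneg 3]

theorem concaveOn_selectionProb : ConcaveOn ℝ (Ici 0) selectionProb := by
  obtain ⟨hκ₀, hκ₁⟩ := cubic_coeff_bounds
  set κ := (4 - 2 * √3) / 3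
  replace hκ₀ : 0 ≤ κ := by linarith
  refine concaveOn_one_sub_exp_neg (convex_Ici 0) (g' := fun t => 1 + t + 3 * κ * t ^ 2)
    (g'' := fun t => 1 + 6 * κ * t) (fun t => ?_) (fun t => ?_) fun t ht => ?_
  · exact (((hasDerivAt_id' t).add ((hasDerivAt_pow 2 t).const_mul (1/2))).add
      ((hasDerivAt_pow 3 t).const_mul κ)).congr_deriv (by norm_num; ring)
  · exact (((hasDerivAt_id' t).const_add 1).add
      ((hasDerivAt_pow 2 t).const_mul (3 * κ))).congr_deriv (by norm_num; ring)
  · rw [interior_Ici, mem_Ioi] at ht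
    nlinarith [mul_nonneg hκ₀ (sq_nonneg t), mul_le_mul_of_nonneg_right hκ₁ ht.le]

lemma selectionProb_mono {s t : ℝ} (hs : 0 ≤ s) (hst : s ≤ t) :
    selectionProb s ≤ selectionProb t := by
  have hκ : 0 ≤ (4 - 2 * √3) / 3 := by linarith [cubic_coeff_bounds.1]
  unfold selectionProb
  gcongr

lemma continuous_selectionProb : Continuous selectionProb := by
  unfold selectionProb; fun_prop

lemma abs_selectionProb_le_one {t : ℝ} (ht : 0 ≤ t) : |selectionProb t| ≤ 1 := by
  have h0 : 0 ≤ selectionProb t := by simpa [selectionProb] using selectionProb_mono le_rfl ht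
  exact abs_le.2 ⟨by linarith, sub_le_self _ (exp_pos _).le⟩

/-- The rational coefficient `0.178632 ≤ κ` makes the hypothesis checkable by `norm_num` at
numerals `t`. -/
lemma one_sub_le_selectionProb {t E : ℝ} (ht : 0 ≤ t) {n : ℕ}
    (h : 1 ≤ E * ∑ i ∈ Finset.range n, (t + 1/2 * t ^ 2 + 0.178632 * t ^ 3) ^ i / i !) :
    1 - E ≤ selectionProb t := by
  have hG : t + 1/2 * t ^ 2 + 0.178632 * t ^ 3 ≤
      t + (1/2) * t ^ 2 + ((4 - 2 * √3) / 3) * t ^ 3 := by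
    have := cubic_coeff_bounds.1; gcongr
  set G := t + 1/2 * t ^ 2 + 0.178632 * t ^ 3
  set g := t + (1/2) * t ^ 2 + ((4 - 2 * √3) / 3) * t ^ 3
  have hS₀ : 0 ≤ ∑ i ∈ Finset.range n, G ^ i / i ! := by positivity
  have hS : ∑ i ∈ Finset.range n, G ^ i / i ! ≤ exp g :=
    (sum_le_exp_of_nonneg (by positivity) n).trans (exp_le_exp.2 hG)
  have hE : 0 ≤ E := by
    by_contra! hE
    nlinarith
  have : exp (-g) ≤ E := by
    rw [exp_neg, inv_le_iff_one_le_mul₀ (exp_pos g)]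
    exact h.trans (mul_le_mul_of_nonneg_left hS hE)
  unfold selectionProb
  linarith

lemma sub_le_selectionProb {t : ℝ} (ht : 0 ≤ t) : t - 0.29 * t ^ 2 ≤ selectionProb t := by
  have h := one_sub_le_selectionProb (E := 1 - t + 0.29 * t ^ 2) ht (n := 3) (by
    simp only [Finset.sum_range_succ, Finset.sum_range_zero]
    norm_num
    nlinarith [pow_nonneg ht 3, pow_nonneg ht 4, pow_nonneg ht 5,
      pow_nonneg ht 6, pow_nonneg ht 7, pow_nonneg ht 8,
      mul_nonneg (pow_nonneg ht 2) (sq_nonneg (t ^ 2 - 1))])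
  linarith

lemma chordStep_selectionProb (n : ℕ) {α β γ u a v b : ℝ} (hγ : 0 < γ) (huv : u < v)
    (hv : 0 ≤ v)
    (hb : 1 ≤ (1 - b) * ∑ i ∈ Finset.range n, (v + 1/2 * v ^ 2 + 0.178632 * v ^ 3) ^ i / i !)
    (hq : (β - (b - a) / (v - u)) ^ 2 ≤ 4 * γ * (a - (b - a) / (v - u) * u - α)) :
    ChordStep selectionProb (fun t => α + β * t - γ * t ^ 2) (u, a) (v, b) := by
  refine ⟨huv, by simpa using one_sub_le_selectionProb hv hb, fun t _ => ?_⟩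
  calc α + β * t - γ * t ^ 2 ≤ (a - (b - a) / (v - u) * u) + (b - a) / (v - u) * t :=
        quadratic_le_affine hγ hq t
    _ = chord (u, a) (v, b) t := by unfold chord; ring

lemma quadratic_le_selectionProb {t : ℝ} (ht : 0 ≤ t) :
    -0.01108 + 1.10746 * t - 0.30812 * t ^ 2 ≤ selectionProb t := by
  -- Node values are `1 - 1 / ∑_{i<13} G(x)^i / i!` rounded down; each chord even lies above the
  -- quadratic on all of `ℝ`, so the check is a discriminant inequality.
  have hchain : List.IsChain
      (ChordStep selectionProb fun t => -0.01108 + 1.10746 * t - 0.30812 * t ^ 2)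
      [(0, 0), (0.22, 0.2181), (0.38, 0.3699), (0.78, 0.6893), (1.27, 0.913), (1.56, 0.9684),
        (1.68, 0.9805), (1.8, 0.9884)] := by
    simp only [List.isChain_cons_cons, List.isChain_singleton, and_true]
    refine ⟨?_, ?_, ?_, ?_, ?_, ?_, ?_⟩ <;>
      exact chordStep_selectionProb 13 (by norm_num) (by norm_num) (by norm_num)
        (by norm_num [Finset.sum_range_succ, Nat.factorial]) (by norm_num)
  rcases lt_or_ge t 1.8 with h | h
  · exact le_of_isChain_chordStep (n := (0, 0)) concaveOn_selectionProb
      (by simp [selectionProb]) hchain ⟨ht, h⟩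
  · calc -0.01108 + 1.10746 * t - 0.30812 * t ^ 2 ≤ 0.9884 + 0 * t :=
          quadratic_le_affine (by norm_num) (by norm_num) t
      _ ≤ selectionProb 1.8 := by
          simpa using one_sub_le_selectionProb (E := 1 - 0.9884) (n := 13) (by norm_num)
            (by norm_num [Finset.sum_range_succ, Nat.factorial])
      _ ≤ selectionProb t := selectionProb_mono (by norm_num) h

/-- Lemma 3.1(b): if `y ≥ 0` is square-integrable with `E[y] = μ ∈ [0,1]` and
`E[y²] ≤ μ + μ²/2`, then `E[p(y)] ≥ 0.634·μ`, where
`p(y) = 1 - exp(-(y + y²/2 + ((4-2√3)/3)·y³))`. -/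
theorem second_moment_to_ratio_b
    {Ω : Type*} [MeasurableSpace Ω] (P : Measure Ω) [IsProbabilityMeasure P]
    (y : Ω → ℝ) (μ : ℝ)
    (hy : MemLp y 2 P) (hpos : ∀ ω, 0 ≤ y ω)
    (hmean : ∫ ω, y ω ∂P = μ) (hμ0 : 0 ≤ μ) (hμ1 : μ ≤ 1)
    (hsq : ∫ ω, (y ω) ^ 2 ∂P ≤ μ + (1/2) * μ ^ 2) :
    0.634 * μ ≤ ∫ ω,
      (1 - Real.exp (-(y ω + (1/2) * (y ω) ^ 2 + ((4 - 2 * Real.sqrt 3) / 3) * (y ω) ^ 3))) ∂P := by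
  change 0.634 * μ ≤ ∫ ω, selectionProb (y ω) ∂P
  have hint : Integrable (fun ω => selectionProb (y ω)) P :=
    .of_bound (continuous_selectionProb.comp_aestronglyMeasurable hy.aestronglyMeasurable) 1
      (.of_forall fun ω => abs_selectionProb_le_one (hpos ω))
  rcases le_total μ (1/2) with hμ | hμ
  · have h := le_integral_of_quadratic_le (α := 0) (β := 1) hy hint fun ω => by
      simpa using sub_le_selectionProb (hpos ω)
    rw [hmean] at h
    nlinarith [mul_nonneg hμ0 (sub_nonneg.2 hμ)]
  · have h := le_integral_of_quadratic_le hy hint fun ω => quadratic_le_selectionProb (hpos ω)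
    rw [hmean] at h
    nlinarith [mul_nonneg (sub_nonneg.2 hμ1) (sub_nonneg.2 hμ)]
end

section
/- Let y be a nonnegative square-integrable real random variable with E[y] = μ where 0 ≤ μ ≤ 1, and suppose E[y²] ≤ 1.05771·μ + 0.231·μ². Then E[min(y, 1)] ≥ 0.731·μ. -/
/-!
For every `s`, the parabola `1 - (y - s)² / (4 (s - 1))` lies below `min y 1` (it touches the line
`y` at `y = 2 - s`). Taking expectations bounds `E[min(y, 1)]` from below by the first two moments
of `y`; the choice `s = 2 - 0.462 μ` turns the second-moment hypothesis into `0.731 μ`.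
-/

open MeasureTheory

lemma sub_sub_sq_le_mul_min_one (y s : ℝ) :
    4 * (s - 1) - (y - s) ^ 2 ≤ 4 * (s - 1) * min y 1 := by
  rcases le_total y 1 with h | h
  · rw [min_eq_left h]
    nlinarith [sq_nonneg (y + s - 2)]
  · rw [min_eq_right h]
    nlinarith [sq_nonneg (y - s)]

section

variable {Ω : Type*} [MeasurableSpace Ω] {P : Measure Ω} [IsProbabilityMeasure P] {y : Ω → ℝ}

lemma integral_sub_const_sq (hy : MemLp y 2 P) (c : ℝ) :
    ∫ ω, (y ω - c) ^ 2 ∂P = ∫ ω, y ω ^ 2 ∂P - 2 * c * ∫ ω, y ω ∂P + c ^ 2 := by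
  have hy2 : Integrable (fun ω => y ω ^ 2) P := hy.integrable_sq
  have hy1 : Integrable (fun ω => 2 * c * y ω) P := (hy.integrable one_le_two).const_mul _
  have hdiff : Integrable (fun ω => y ω ^ 2 - 2 * c * y ω) P := hy2.sub hy1
  calc ∫ ω, (y ω - c) ^ 2 ∂P = ∫ ω, (y ω ^ 2 - 2 * c * y ω) + c ^ 2 ∂P := by
        congr 1 with ω; ring
    _ = _ := by
        rw [integral_add hdiff (integrable_const _), integral_sub hy2 hy1,
          integral_const_mul, integral_const, probReal_univ, one_smul]

lemma sub_integral_sub_const_sq_le_mul_integral_min_one (hy : MemLp y 2 P) (s : ℝ) :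
    4 * (s - 1) - ∫ ω, (y ω - s) ^ 2 ∂P ≤ 4 * (s - 1) * ∫ ω, min (y ω) 1 ∂P := by
  have hsq : Integrable (fun ω => (y ω - s) ^ 2) P :=
    (hy.sub (memLp_const s)).integrable_sq
  have hmin : Integrable (fun ω => min (y ω) 1) P :=
    (hy.integrable one_le_two).inf (integrable_const 1)
  calc 4 * (s - 1) - ∫ ω, (y ω - s) ^ 2 ∂P = ∫ ω, 4 * (s - 1) - (y ω - s) ^ 2 ∂P := by
        rw [integral_sub (integrable_const _) hsq, integral_const, probReal_univ, one_smul]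
    _ ≤ ∫ ω, 4 * (s - 1) * min (y ω) 1 ∂P :=
        integral_mono ((integrable_const _).sub hsq) (hmin.const_mul _)
          fun ω => sub_sub_sq_le_mul_min_one (y ω) s
    _ = 4 * (s - 1) * ∫ ω, min (y ω) 1 ∂P := integral_const_mul _ _

end

theorem second_moment_to_ratio_c_general
    {Ω : Type*} [MeasurableSpace Ω] (P : Measure Ω) [IsProbabilityMeasure P]
    (y : Ω → ℝ) (μ : ℝ)
    (hy : MemLp y 2 P)
    (hmean : ∫ ω, y ω ∂P = μ) (hμ0 : 0 ≤ μ) (hμ1 : μ ≤ 1)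
    (hsq : ∫ ω, (y ω) ^ 2 ∂P ≤ 1.05771 * μ + 0.231 * μ ^ 2) :
    0.731 * μ ≤ ∫ ω, min (y ω) 1 ∂P := by
  have key := sub_integral_sub_const_sq_le_mul_integral_min_one hy (2 - 0.462 * μ)
  rw [integral_sub_const_sq hy, hmean] at key
  have hs : 0 < 4 * (2 - 0.462 * μ - 1) := by linarith
  -- after expanding, `key` exceeds `4 (s - 1) · 0.731 μ` by `μ (0.01829 - 0.017556 μ) ≥ 0`
  refine le_of_mul_le_mul_left ?_ hs
  nlinarith [mul_nonneg hμ0 (sub_nonneg.mpr hμ1)]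

/-- Lemma 3.1(c): if `y ≥ 0` is square-integrable with `E[y] = μ ∈ [0,1]` and
`E[y²] ≤ 1.05771·μ + 0.231·μ²`, then `E[min(y,1)] ≥ 0.731·μ`. -/
theorem second_moment_to_ratio_c
    {Ω : Type*} [MeasurableSpace Ω] (P : Measure Ω) [IsProbabilityMeasure P]
    (y : Ω → ℝ) (μ : ℝ)
    (hy : MemLp y 2 P) (hpos : ∀ ω, 0 ≤ y ω)
    (hmean : ∫ ω, y ω ∂P = μ) (hμ0 : 0 ≤ μ) (hμ1 : μ ≤ 1)
    (hsq : ∫ ω, (y ω) ^ 2 ∂P ≤ 1.05771 * μ + 0.231 * μ ^ 2) :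
    0.731 * μ ≤ ∫ ω, min (y ω) 1 ∂P :=
  second_moment_to_ratio_c_general P y μ hy hmean hμ0 hμ1 hsq
end
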